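/- If (Σ, σ, γ) and (Σ', σ', γ') are factorisations of a comonad distributive law χ : T ⟶ C, then the triple (ΣΣ', Σσ' ∘ σΣ', γΣ' ∘ Σγ') is again a factorisation of χ; that is, the composed natural transformations Σσ' ∘ σΣ' : TΣΣ' ⟶ ΣΣ'T and γΣ' ∘ Σγ' : ΣΣ'C ⟶ CΣΣ' are distributive laws satisfying the Yang–Baxter condition with χ. -/

import Mathlib

open CategoryTheory

universe v u

namespace BohmStefan

variable {A : Type u} [Category.{v} A]

/-- A distributive law `σ : TΣ ⟶ ΣT` between a comonad `Tm` and an endofunctor `S`,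
with components `σ_X : T(S X) ⟶ S(T X)`. -/
def IsComonadEndoLaw (Tm : Comonad A) (S : A ⥤ A)
    (σ : S ⋙ (Tm : A ⥤ A) ⟶ (Tm : A ⥤ A) ⋙ S) : Prop :=
  (∀ X : A, σ.app X ≫ S.map (Tm.δ.app X) =
      Tm.δ.app (S.obj X) ≫ (Tm : A ⥤ A).map (σ.app X) ≫ σ.app (Tm.obj X)) ∧
  (∀ X : A, σ.app X ≫ S.map (Tm.ε.app X) = Tm.ε.app (S.obj X))

/-- A distributive law `γ : ΣC ⟶ CΣ` between an endofunctor `S` and a comonad `Cm`,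
with components `γ_X : S(C X) ⟶ C(S X)`. -/
def IsEndoComonadLaw (S : A ⥤ A) (Cm : Comonad A)
    (γ : (Cm : A ⥤ A) ⋙ S ⟶ S ⋙ (Cm : A ⥤ A)) : Prop :=
  (∀ X : A, γ.app X ≫ Cm.δ.app (S.obj X) =
      S.map (Cm.δ.app X) ≫ γ.app (Cm.obj X) ≫ (Cm : A ⥤ A).map (γ.app X)) ∧
  (∀ X : A, γ.app X ≫ Cm.ε.app (S.obj X) = S.map (Cm.ε.app X))

/-- A comonad distributive law `χ : Tm ⟶ Cm`. -/
def IsComonadDistLaw (Tm Cm : Comonad A)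
    (χ : (Cm : A ⥤ A) ⋙ (Tm : A ⥤ A) ⟶ (Tm : A ⥤ A) ⋙ (Cm : A ⥤ A)) : Prop :=
  IsComonadEndoLaw Tm (Cm : A ⥤ A) χ ∧ IsEndoComonadLaw (Tm : A ⥤ A) Cm χ

/-- The Yang-Baxter condition for `(S, σ, γ)` with respect to `χ`. -/
def IsYangBaxter (Tm Cm : Comonad A)
    (χ : (Cm : A ⥤ A) ⋙ (Tm : A ⥤ A) ⟶ (Tm : A ⥤ A) ⋙ (Cm : A ⥤ A)) (S : A ⥤ A)
    (σ : S ⋙ (Tm : A ⥤ A) ⟶ (Tm : A ⥤ A) ⋙ S)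
    (γ : (Cm : A ⥤ A) ⋙ S ⟶ S ⋙ (Cm : A ⥤ A)) : Prop :=
  ∀ X : A, σ.app (Cm.obj X) ≫ S.map (χ.app X) ≫ γ.app (Tm.obj X) =
    (Tm : A ⥤ A).map (γ.app X) ≫ χ.app (S.obj X) ≫ (Cm : A ⥤ A).map (σ.app X)

/-- `(S, σ, γ)` is a factorisation of the distributive law `χ : Tm ⟶ Cm`. -/
def IsFactorisation (Tm Cm : Comonad A)
    (χ : (Cm : A ⥤ A) ⋙ (Tm : A ⥤ A) ⟶ (Tm : A ⥤ A) ⋙ (Cm : A ⥤ A)) (S : A ⥤ A)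
    (σ : S ⋙ (Tm : A ⥤ A) ⟶ (Tm : A ⥤ A) ⋙ S)
    (γ : (Cm : A ⥤ A) ⋙ S ⟶ S ⋙ (Cm : A ⥤ A)) : Prop :=
  IsComonadEndoLaw Tm S σ ∧ IsEndoComonadLaw S Cm γ ∧ IsYangBaxter Tm Cm χ S σ γ

/-! Each axiom of the composite law follows by functoriality of `S` from the same axiom for the
two factors, glued together by a single naturality square of `σ` (resp. `γ`). The Yang–Baxter
hexagon for `S' ⋙ S` is the hexagon for `S'` under `S`, moved past `σ` and `γ` by naturality,
followed by the hexagon for `S`. -/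

section Composition

variable {Tm Cm : Comonad A} {S S' : A ⥤ A}

theorem IsComonadEndoLaw.comp {σ : S ⋙ (Tm : A ⥤ A) ⟶ (Tm : A ⥤ A) ⋙ S}
    {σ' : S' ⋙ (Tm : A ⥤ A) ⟶ (Tm : A ⥤ A) ⋙ S'}
    (h : IsComonadEndoLaw Tm S σ) (h' : IsComonadEndoLaw Tm S' σ')
    (σ₂ : (S' ⋙ S) ⋙ (Tm : A ⥤ A) ⟶ (Tm : A ⥤ A) ⋙ (S' ⋙ S))
    (hσ₂ : ∀ X : A, σ₂.app X = σ.app (S'.obj X) ≫ S.map (σ'.app X)) :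
    IsComonadEndoLaw Tm (S' ⋙ S) σ₂ := by
  refine ⟨fun X => ?_, fun X => ?_⟩
  · calc σ₂.app X ≫ S.map (S'.map (Tm.δ.app X))
        = (σ.app (S'.obj X) ≫ S.map (Tm.δ.app (S'.obj X))) ≫
            S.map ((Tm : A ⥤ A).map (σ'.app X)) ≫ S.map (σ'.app (Tm.obj X)) := by
          simp only [hσ₂, Category.assoc, ← S.map_comp, h'.1]
      _ = Tm.δ.app (S.obj (S'.obj X)) ≫ (Tm : A ⥤ A).map (σ.app (S'.obj X)) ≫
            (σ.app (Tm.obj (S'.obj X)) ≫ S.map ((Tm : A ⥤ A).map (σ'.app X))) ≫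
            S.map (σ'.app (Tm.obj X)) := by
          rw [h.1]; simp only [Category.assoc]
      _ = _ := by
          erw [← σ.naturality]; simp [hσ₂]
  · calc σ₂.app X ≫ S.map (S'.map (Tm.ε.app X))
        = σ.app (S'.obj X) ≫ S.map (σ'.app X ≫ S'.map (Tm.ε.app X)) := by
          rw [hσ₂, Category.assoc, ← S.map_comp]
      _ = Tm.ε.app (S.obj (S'.obj X)) := by rw [h'.2, h.2]

theorem IsEndoComonadLaw.comp {γ : (Cm : A ⥤ A) ⋙ S ⟶ S ⋙ (Cm : A ⥤ A)}
    {γ' : (Cm : A ⥤ A) ⋙ S' ⟶ S' ⋙ (Cm : A ⥤ A)}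
    (h : IsEndoComonadLaw S Cm γ) (h' : IsEndoComonadLaw S' Cm γ')
    (γ₂ : (Cm : A ⥤ A) ⋙ (S' ⋙ S) ⟶ (S' ⋙ S) ⋙ (Cm : A ⥤ A))
    (hγ₂ : ∀ X : A, γ₂.app X = S.map (γ'.app X) ≫ γ.app (S'.obj X)) :
    IsEndoComonadLaw (S' ⋙ S) Cm γ₂ := by
  refine ⟨fun X => ?_, fun X => ?_⟩
  · calc γ₂.app X ≫ Cm.δ.app (S.obj (S'.obj X))
        = S.map (S'.map (Cm.δ.app X)) ≫ S.map (γ'.app (Cm.obj X)) ≫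
            (S.map ((Cm : A ⥤ A).map (γ'.app X)) ≫ γ.app ((Cm : A ⥤ A).obj (S'.obj X))) ≫
            (Cm : A ⥤ A).map (γ.app (S'.obj X)) := by
          simp only [hγ₂, Category.assoc, h.1, ← S.map_comp_assoc, h'.1]
      _ = _ := by
          erw [γ.naturality]; simp [hγ₂]
  · calc γ₂.app X ≫ Cm.ε.app (S.obj (S'.obj X))
        = S.map (γ'.app X ≫ Cm.ε.app (S'.obj X)) := by
          rw [hγ₂, Category.assoc, h.2, S.map_comp]
      _ = S.map (S'.map (Cm.ε.app X)) := by rw [h'.2]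

theorem IsYangBaxter.comp
    {χ : (Cm : A ⥤ A) ⋙ (Tm : A ⥤ A) ⟶ (Tm : A ⥤ A) ⋙ (Cm : A ⥤ A)}
    {σ : S ⋙ (Tm : A ⥤ A) ⟶ (Tm : A ⥤ A) ⋙ S} {γ : (Cm : A ⥤ A) ⋙ S ⟶ S ⋙ (Cm : A ⥤ A)}
    {σ' : S' ⋙ (Tm : A ⥤ A) ⟶ (Tm : A ⥤ A) ⋙ S'}
    {γ' : (Cm : A ⥤ A) ⋙ S' ⟶ S' ⋙ (Cm : A ⥤ A)}
    (h : IsYangBaxter Tm Cm χ S σ γ) (h' : IsYangBaxter Tm Cm χ S' σ' γ')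
    (σ₂ : (S' ⋙ S) ⋙ (Tm : A ⥤ A) ⟶ (Tm : A ⥤ A) ⋙ (S' ⋙ S))
    (hσ₂ : ∀ X : A, σ₂.app X = σ.app (S'.obj X) ≫ S.map (σ'.app X))
    (γ₂ : (Cm : A ⥤ A) ⋙ (S' ⋙ S) ⟶ (S' ⋙ S) ⋙ (Cm : A ⥤ A))
    (hγ₂ : ∀ X : A, γ₂.app X = S.map (γ'.app X) ≫ γ.app (S'.obj X)) :
    IsYangBaxter Tm Cm χ (S' ⋙ S) σ₂ γ₂ := fun X =>
  calc σ₂.app (Cm.obj X) ≫ S.map (S'.map (χ.app X)) ≫ γ₂.app (Tm.obj X)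
      = (σ.app (S'.obj (Cm.obj X)) ≫ S.map ((Tm : A ⥤ A).map (γ'.app X))) ≫
          S.map (χ.app (S'.obj X)) ≫
          (S.map ((Cm : A ⥤ A).map (σ'.app X)) ≫ γ.app (S'.obj (Tm.obj X))) := by
        simp only [hσ₂, hγ₂, Category.assoc, ← S.map_comp_assoc, h' X]
    _ = (Tm : A ⥤ A).map (S.map (γ'.app X)) ≫
          (σ.app ((Cm : A ⥤ A).obj (S'.obj X)) ≫ S.map (χ.app (S'.obj X)) ≫
            γ.app (Tm.obj (S'.obj X))) ≫
          (Cm : A ⥤ A).map (S.map (σ'.app X)) := by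
        erw [← σ.naturality, γ.naturality]; simp only [Category.assoc]; rfl
    _ = _ := by
        rw [h]; simp [hσ₂, hγ₂]

end Composition

theorem tensor_isFactorisation (Tm Cm : Comonad A)
    (χ : (Cm : A ⥤ A) ⋙ (Tm : A ⥤ A) ⟶ (Tm : A ⥤ A) ⋙ (Cm : A ⥤ A))
    (S S' : A ⥤ A)
    (σ : S ⋙ (Tm : A ⥤ A) ⟶ (Tm : A ⥤ A) ⋙ S)
    (γ : (Cm : A ⥤ A) ⋙ S ⟶ S ⋙ (Cm : A ⥤ A))
    (σ' : S' ⋙ (Tm : A ⥤ A) ⟶ (Tm : A ⥤ A) ⋙ S')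
    (γ' : (Cm : A ⥤ A) ⋙ S' ⟶ S' ⋙ (Cm : A ⥤ A))
    (h : IsFactorisation Tm Cm χ S σ γ)
    (h' : IsFactorisation Tm Cm χ S' σ' γ')
    (σ₂ : (S' ⋙ S) ⋙ (Tm : A ⥤ A) ⟶ (Tm : A ⥤ A) ⋙ (S' ⋙ S))
    (hσ₂ : ∀ X : A, σ₂.app X = σ.app (S'.obj X) ≫ S.map (σ'.app X))
    (γ₂ : (Cm : A ⥤ A) ⋙ (S' ⋙ S) ⟶ (S' ⋙ S) ⋙ (Cm : A ⥤ A))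
    (hγ₂ : ∀ X : A, γ₂.app X = S.map (γ'.app X) ≫ γ.app (S'.obj X)) :
    IsFactorisation Tm Cm χ (S' ⋙ S) σ₂ γ₂ :=
  ⟨h.1.comp h'.1 σ₂ hσ₂, h.2.1.comp h'.2.1 γ₂ hγ₂, h.2.2.comp h'.2.2 σ₂ hσ₂ γ₂ hγ₂⟩

end BohmStefan
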